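/- Let m, n ∈ Z² with gcd(c1, c2) = 1 for positive integers c1, c2. Then the long-element SL(3,Z) Kloosterman sum factors as a product of classical Kloosterman sums: S_{wl}(ψ_m, ψ_n; (c1,c2)) = S(m1, −n2 c2; c1) · S(m2 c1, −n1; c2). -/
import Mathlib


open scoped BigOperators Classical

/-- `e(t) = exp(2πit)`. -/
noncomputable def eFn (t : ℂ) : ℂ := Complex.exp (2 * Real.pi * Complex.I * t)

/-- The summand of the SL(3,Z) Kloosterman sum: given `B1,C1` mod `D1` and `B2,C2` mod `D2`
(with the gcd conditions guaranteeing existence of `Y1,Z1,Y2,Z2`), the value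
`e((m1 B1 + n1(Y1 D2 − Z1 B2))/D1 + (m2 B2 + n2(Y2 D1 − Z2 B1))/D2)`, which is independent
of the choices of `Y1,Z1,Y2,Z2`. -/
noncomputable def sl3Summand (m1 m2 n1 n2 : ℤ) (D1 D2 : ℕ) (B1 C1 B2 C2 : ℤ) : ℂ :=
  if h1 : ∃ p : ℤ × ℤ, (D1 : ℤ) ∣ (p.1 * B1 + p.2 * C1 - 1) then
    if h2 : ∃ p : ℤ × ℤ, (D2 : ℤ) ∣ (p.1 * B2 + p.2 * C2 - 1) then
      eFn (((m1 * B1 + n1 * (h1.choose.1 * D2 - h1.choose.2 * B2) : ℤ) : ℂ) / (D1 : ℂ)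
        + ((m2 * B2 + n2 * (h2.choose.1 * D1 - h2.choose.2 * B1) : ℤ) : ℂ) / (D2 : ℂ))
    else 0
  else 0

/-- The SL(3,Z) Kloosterman sum `S(m1,m2,n1,n2;D1,D2)` of Bump–Friedberg–Goldfeld. -/
noncomputable def SL3Kloosterman (m1 m2 n1 n2 : ℤ) (D1 D2 : ℕ) : ℂ :=
  ∑ B1 ∈ Finset.range D1, ∑ C1 ∈ Finset.range D1, ∑ B2 ∈ Finset.range D2,
    ∑ C2 ∈ Finset.range D2,
    if ((D1 * D2 : ℤ) ∣ ((D1 : ℤ) * C2 + (B1 : ℤ) * B2 + (D2 : ℤ) * C1)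
        ∧ Int.gcd (Int.gcd (B1 : ℤ) (C1 : ℤ)) (D1 : ℤ) = 1
        ∧ Int.gcd (Int.gcd (B2 : ℤ) (C2 : ℤ)) (D2 : ℤ) = 1) then
      sl3Summand m1 m2 n1 n2 D1 D2 (B1 : ℤ) (C1 : ℤ) (B2 : ℤ) (C2 : ℤ)
    else 0

/-- The long-element SL(3,Z) Kloosterman sum `S_{w_l}(ψ_m, ψ_n; c)`. -/
noncomputable def Swl (m1 m2 n1 n2 : ℤ) (c1 c2 : ℕ) : ℂ :=
  SL3Kloosterman (-n2) (-n1) m1 m2 c1 c2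

/-- The classical Kloosterman sum `S(m,n;c)`. -/
noncomputable def kloosterman (m n : ℤ) (c : ℕ) : ℂ :=
  ∑ x ∈ Finset.range c,
    if Nat.gcd x c = 1 then
      eFn (((m * (x : ℤ) + n * ((((x : ZMod c)⁻¹ : ZMod c).val : ℤ)) : ℤ) : ℂ) / (c : ℂ))
    else 0

lemma eFn_add (x y : ℂ) : eFn (x + y) = eFn x * eFn y := by
  unfold eFn; rw [← Complex.exp_add]; ring_nf

lemma eFn_int (k : ℤ) : eFn (k : ℂ) = 1 := by
  unfold eFn
  simpa [mul_comm, mul_assoc, mul_left_comm] using Complex.exp_int_mul_two_pi_mul_I k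

lemma eFn_congr {c : ℕ} (hc : 0 < c) {a b : ℤ} (h : (c:ℤ) ∣ a - b) :
    eFn ((a : ℂ)/c) = eFn ((b : ℂ)/c) := by
  obtain ⟨k, hk⟩ := h
  have ha : a = b + c * k := by linarith
  have hc' : (c:ℂ) ≠ 0 := Nat.cast_ne_zero.mpr hc.ne'
  have : (a:ℂ)/c = (b:ℂ)/c + (k:ℂ) := by
    field_simp
    push_cast [ha]
    ring
  rw [this, eFn_add, eFn_int, mul_one]

lemma key_dvd (d D2 B B2 C Y Z y : ℤ) (h1 : d ∣ Y*B + Z*C - 1) (h2 : d ∣ y*B - 1)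
    (h3 : d ∣ B*B2 + D2*C) : d ∣ (Y*D2 - Z*B2) - y*D2 := by
  have hA : d ∣ (Y - y)*B + Z*C := by
    have e : (Y - y)*B + Z*C = (Y*B + Z*C - 1) - (y*B - 1) := by ring
    rw [e]; exact dvd_sub h1 h2
  have hB : d ∣ B * ((Y*D2 - Z*B2) - y*D2) := by
    have e : B * ((Y*D2 - Z*B2) - y*D2) = D2 * ((Y - y)*B + Z*C) - Z * (B*B2 + D2*C) := by ring
    rw [e]; exact dvd_sub (hA.mul_left _) (h3.mul_left _)
  have e : (Y*D2 - Z*B2) - y*D2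
      = y * (B * ((Y*D2 - Z*B2) - y*D2)) - (y*B - 1) * ((Y*D2 - Z*B2) - y*D2) := by ring
  rw [e]; exact dvd_sub (hB.mul_left _) (h2.mul_right _)

lemma sl3Summand_eval (M1 M2 N1 N2 : ℤ) (D1 D2 : ℕ) (hD1 : 0 < D1) (hD2 : 0 < D2)
    (B1 C1 B2 C2 y1 y2 : ℤ)
    (hy1 : (D1:ℤ) ∣ y1 * B1 - 1) (hy2 : (D2:ℤ) ∣ y2 * B2 - 1)
    (hcong1 : (D1:ℤ) ∣ B1 * B2 + D2 * C1) (hcong2 : (D2:ℤ) ∣ B2 * B1 + D1 * C2) :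
    sl3Summand M1 M2 N1 N2 D1 D2 B1 C1 B2 C2
      = eFn (((M1 * B1 + N1 * (y1 * D2) : ℤ) : ℂ) / (D1:ℂ))
        * eFn (((M2 * B2 + N2 * (y2 * D1) : ℤ) : ℂ) / (D2:ℂ)) := by
  have h1 : ∃ p : ℤ × ℤ, (D1:ℤ) ∣ (p.1 * B1 + p.2 * C1 - 1) := ⟨(y1, 0), by simpa using hy1⟩
  have h2 : ∃ p : ℤ × ℤ, (D2:ℤ) ∣ (p.1 * B2 + p.2 * C2 - 1) := ⟨(y2, 0), by simpa using hy2⟩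
  rw [sl3Summand, dif_pos h1, dif_pos h2, eFn_add]
  have hs1 := h1.choose_spec
  have hs2 := h2.choose_spec
  congr 1
  · refine eFn_congr hD1 ?_
    have hk := key_dvd (D1:ℤ) D2 B1 B2 C1 h1.choose.1 h1.choose.2 y1 hs1 hy1 hcong1
    have e : (M1 * B1 + N1 * (h1.choose.1 * D2 - h1.choose.2 * B2))
        - (M1 * B1 + N1 * (y1 * D2))
        = N1 * ((h1.choose.1 * D2 - h1.choose.2 * B2) - y1 * D2) := by ring
    rw [e]; exact hk.mul_left _
  · refine eFn_congr hD2 ?_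
    have hk := key_dvd (D2:ℤ) D1 B2 B1 C2 h2.choose.1 h2.choose.2 y2 hs2 hy2 hcong2
    have e : (M2 * B2 + N2 * (h2.choose.1 * D1 - h2.choose.2 * B1))
        - (M2 * B2 + N2 * (y2 * D1))
        = N2 * ((h2.choose.1 * D1 - h2.choose.2 * B1) - y2 * D1) := by ring
    rw [e]; exact hk.mul_left _

-- c1 ∣ A + c2*C1  for C1 < c1 iff C1 is the val of -A * c2⁻¹
lemma cong_iff (c : ℕ) [NeZero c] (c' : ℕ) (h : Nat.Coprime c' c) (A : ℤ) (C : ℕ) (hC : C < c) :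
    ((c:ℤ) ∣ A + (c':ℤ) * (C:ℤ)) ↔ C = ((-A : ZMod c) * (c' : ZMod c)⁻¹).val := by
  have hu : IsUnit (c' : ZMod c) := (ZMod.isUnit_iff_coprime c' c).mpr h
  have hinv : (c' : ZMod c) * (c' : ZMod c)⁻¹ = 1 := ZMod.mul_inv_of_unit _ hu
  rw [← ZMod.intCast_zmod_eq_zero_iff_dvd]
  push_cast
  have hval : ((C : ZMod c)).val = C := ZMod.val_cast_of_lt hC
  constructor
  · intro hx
    have hx' : (c' : ZMod c) * (C : ZMod c) = -A := by linear_combination hx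
    have : (C : ZMod c) = (-A : ZMod c) * (c' : ZMod c)⁻¹ := by
      calc (C : ZMod c) = ((c' : ZMod c) * (c' : ZMod c)⁻¹) * C := by rw [hinv]; ring
        _ = ((c' : ZMod c) * C) * (c' : ZMod c)⁻¹ := by ring
        _ = (-A : ZMod c) * (c' : ZMod c)⁻¹ := by rw [hx']
    rw [← hval, this]
  · intro hx
    have : (C : ZMod c) = (-A : ZMod c) * (c' : ZMod c)⁻¹ := by
      rw [hx]; simp [ZMod.natCast_val, ZMod.cast_id]
    rw [this]
    linear_combination (-(A : ZMod c)) * hinv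

-- the gcd forcing lemma
lemma gcd_forced (c1 c2 : ℕ) (h : Nat.Coprime c1 c2) (B1 B2 C1 : ℕ)
    (hdvd : (c1:ℤ) ∣ (B1:ℤ) * (B2:ℤ) + (c2:ℤ) * (C1:ℤ))
    (hg : Int.gcd (Int.gcd (B1:ℤ) (C1:ℤ)) (c1:ℤ) = 1) : Nat.gcd B1 c1 = 1 := by
  have hdvd' : c1 ∣ B1 * B2 + c2 * C1 := by exact_mod_cast hdvd
  set g := Nat.gcd B1 c1 with hgdef
  have hgB1 : g ∣ B1 := Nat.gcd_dvd_left _ _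
  have hgc1 : g ∣ c1 := Nat.gcd_dvd_right _ _
  have h1 : g ∣ B1 * B2 + c2 * C1 := hgc1.trans hdvd'
  have h2 : g ∣ c2 * C1 := (Nat.dvd_add_right (hgB1.mul_right _)).mp h1
  have hgc2 : Nat.Coprime g c2 := Nat.Coprime.coprime_dvd_left hgc1 h
  have h3 : g ∣ C1 := hgc2.dvd_of_dvd_mul_left h2
  have hg' : Nat.gcd (Nat.gcd B1 C1) c1 = 1 := by
    have : Int.gcd (Int.gcd (B1:ℤ) (C1:ℤ)) (c1:ℤ) = Nat.gcd (Nat.gcd B1 C1) c1 := by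
      simp [Int.gcd_natCast_natCast]
    omega
  have h4 : g ∣ 1 := hg' ▸ Nat.dvd_gcd (Nat.dvd_gcd hgB1 h3) hgc1
  exact Nat.dvd_one.mp h4

lemma crt_split (c1 c2 : ℕ) (h : Nat.Coprime c1 c2) (B1 B2 C1 C2 : ℤ) :
    ((c1*c2 : ℤ) ∣ ((c1:ℤ) * C2 + B1 * B2 + (c2:ℤ) * C1))
      ↔ ((c1:ℤ) ∣ (B1 * B2 + (c2:ℤ) * C1) ∧ (c2:ℤ) ∣ ((c1:ℤ) * C2 + B1 * B2)) := by
  have hco : IsCoprime (c1:ℤ) (c2:ℤ) := Int.isCoprime_iff_gcd_eq_one.mpr (by exact_mod_cast h)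
  constructor
  · intro hd
    have h1 : (c1:ℤ) ∣ ((c1:ℤ) * C2 + B1 * B2 + (c2:ℤ) * C1) :=
      (dvd_mul_right (c1:ℤ) (c2:ℤ)).trans hd
    have h2 : (c2:ℤ) ∣ ((c1:ℤ) * C2 + B1 * B2 + (c2:ℤ) * C1) :=
      (dvd_mul_left (c2:ℤ) (c1:ℤ)).trans hd
    constructor
    · have e : B1 * B2 + (c2:ℤ) * C1
          = ((c1:ℤ) * C2 + B1 * B2 + (c2:ℤ) * C1) - (c1:ℤ) * C2 := by ring
      rw [e]; exact dvd_sub h1 (Dvd.intro _ rfl)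
    · have e : (c1:ℤ) * C2 + B1 * B2
          = ((c1:ℤ) * C2 + B1 * B2 + (c2:ℤ) * C1) - (c2:ℤ) * C1 := by ring
      rw [e]; exact dvd_sub h2 (Dvd.intro _ rfl)
  · rintro ⟨h1, h2⟩
    refine hco.mul_dvd ?_ ?_
    · have e : (c1:ℤ) * C2 + B1 * B2 + (c2:ℤ) * C1
          = (B1 * B2 + (c2:ℤ) * C1) + (c1:ℤ) * C2 := by ring
      rw [e]; exact dvd_add h1 (Dvd.intro _ rfl)
    · have e : (c1:ℤ) * C2 + B1 * B2 + (c2:ℤ) * C1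
          = ((c1:ℤ) * C2 + B1 * B2) + (c2:ℤ) * C1 := by ring
      rw [e]; exact dvd_add h2 (Dvd.intro _ rfl)

lemma sum_coprime_eq_sum_units (c : ℕ) [NeZero c] (f : ℕ → ℂ) :
    (∑ x ∈ Finset.range c, if Nat.gcd x c = 1 then f x else 0)
      = ∑ u : (ZMod c)ˣ, f ((u : ZMod c).val) := by
  rw [← Finset.sum_filter]
  refine Finset.sum_bij' (fun x hx => ZMod.unitOfCoprime x
      (by simpa using (Finset.mem_filter.mp hx).2))
    (fun u _ => (u : ZMod c).val) ?_ ?_ ?_ ?_ ?_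
  · intro a ha; exact Finset.mem_univ _
  · intro u hu
    refine Finset.mem_filter.mpr ⟨Finset.mem_range.mpr (ZMod.val_lt _), ?_⟩
    exact ZMod.val_coe_unit_coprime u
  · intro a ha
    have h1 : a < c := Finset.mem_range.mp (Finset.mem_filter.mp ha).1
    simp [ZMod.unitOfCoprime, ZMod.val_cast_of_lt h1]
  · intro u hu
    apply Units.ext
    simp [ZMod.unitOfCoprime, ZMod.natCast_val, ZMod.cast_id]
  · intro a ha
    have h1 : a < c := Finset.mem_range.mp (Finset.mem_filter.mp ha).1
    simp [ZMod.unitOfCoprime, ZMod.val_cast_of_lt h1]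

lemma inv_val_dvd (c : ℕ) [NeZero c] (B : ℕ) (hg : Nat.gcd B c = 1) :
    (c:ℤ) ∣ ((((B : ZMod c)⁻¹).val : ℤ) * (B:ℤ) - 1) := by
  have hu : IsUnit (B : ZMod c) := (ZMod.isUnit_iff_coprime B c).mpr hg
  rw [← ZMod.intCast_zmod_eq_zero_iff_dvd]
  push_cast
  simp only [ZMod.natCast_val, ZMod.cast_id]
  rw [ZMod.inv_mul_of_unit _ hu]
  ring

lemma collapse (M1 M2 N1 N2 : ℤ) (c1 c2 : ℕ) (hc1 : 0 < c1) (hc2 : 0 < c2)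
    (h : Nat.Coprime c1 c2) (B1 B2 : ℕ) (hB1 : B1 < c1) (hB2 : B2 < c2) :
    haveI : NeZero c1 := ⟨hc1.ne'⟩
    haveI : NeZero c2 := ⟨hc2.ne'⟩
    (∑ C1 ∈ Finset.range c1, ∑ C2 ∈ Finset.range c2,
      if ((c1 * c2 : ℤ) ∣ ((c1 : ℤ) * (C2:ℤ) + (B1 : ℤ) * (B2:ℤ) + (c2 : ℤ) * (C1:ℤ))
          ∧ Int.gcd (Int.gcd (B1 : ℤ) (C1 : ℤ)) (c1 : ℤ) = 1
          ∧ Int.gcd (Int.gcd (B2 : ℤ) (C2 : ℤ)) (c2 : ℤ) = 1) then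
        sl3Summand M1 M2 N1 N2 c1 c2 (B1 : ℤ) (C1 : ℤ) (B2 : ℤ) (C2 : ℤ)
      else 0)
      = if (Nat.gcd B1 c1 = 1 ∧ Nat.gcd B2 c2 = 1) then
          eFn (((M1 * (B1:ℤ) + N1 * (((((B1 : ZMod c1))⁻¹).val : ℤ) * (c2:ℤ)) : ℤ) : ℂ) / (c1:ℂ))
          * eFn (((M2 * (B2:ℤ) + N2 * (((((B2 : ZMod c2))⁻¹).val : ℤ) * (c1:ℤ)) : ℤ) : ℂ) / (c2:ℂ))
        else 0 := by
  haveI : NeZero c1 := ⟨hc1.ne'⟩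
  haveI : NeZero c2 := ⟨hc2.ne'⟩
  by_cases hg : Nat.gcd B1 c1 = 1 ∧ Nat.gcd B2 c2 = 1
  · rw [if_pos hg]
    set V := eFn (((M1 * (B1:ℤ) + N1 * (((((B1 : ZMod c1))⁻¹).val : ℤ) * (c2:ℤ)) : ℤ) : ℂ) / (c1:ℂ))
          * eFn (((M2 * (B2:ℤ) + N2 * (((((B2 : ZMod c2))⁻¹).val : ℤ) * (c1:ℤ)) : ℤ) : ℂ) / (c2:ℂ)) with hV
    set e1 := ((-(((B1:ℤ) * (B2:ℤ) : ℤ) : ZMod c1)) * (c2 : ZMod c1)⁻¹).val with he1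
    set e2 := ((-(((B1:ℤ) * (B2:ℤ) : ℤ) : ZMod c2)) * (c1 : ZMod c2)⁻¹).val with he2
    have he1lt : e1 < c1 := ZMod.val_lt _
    have he2lt : e2 < c2 := ZMod.val_lt _
    have hterm : ∀ C1 ∈ Finset.range c1, ∀ C2 ∈ Finset.range c2,
        (if ((c1 * c2 : ℤ) ∣ ((c1 : ℤ) * (C2:ℤ) + (B1 : ℤ) * (B2:ℤ) + (c2 : ℤ) * (C1:ℤ))
          ∧ Int.gcd (Int.gcd (B1 : ℤ) (C1 : ℤ)) (c1 : ℤ) = 1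
          ∧ Int.gcd (Int.gcd (B2 : ℤ) (C2 : ℤ)) (c2 : ℤ) = 1) then
          sl3Summand M1 M2 N1 N2 c1 c2 (B1 : ℤ) (C1 : ℤ) (B2 : ℤ) (C2 : ℤ)
        else 0)
        = (if C1 = e1 ∧ C2 = e2 then V else 0) := by
      intro C1 hC1 C2 hC2
      rw [Finset.mem_range] at hC1 hC2
      have hiff : ((c1 * c2 : ℤ) ∣ ((c1 : ℤ) * (C2:ℤ) + (B1 : ℤ) * (B2:ℤ) + (c2 : ℤ) * (C1:ℤ))
          ∧ Int.gcd (Int.gcd (B1 : ℤ) (C1 : ℤ)) (c1 : ℤ) = 1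
          ∧ Int.gcd (Int.gcd (B2 : ℤ) (C2 : ℤ)) (c2 : ℤ) = 1) ↔ (C1 = e1 ∧ C2 = e2) := by
        constructor
        · rintro ⟨hd, hg1, hg2⟩
          obtain ⟨h1, h2⟩ := (crt_split c1 c2 h (B1:ℤ) (B2:ℤ) (C1:ℤ) (C2:ℤ)).mp hd
          have h2' : (c2:ℤ) ∣ ((B1:ℤ) * (B2:ℤ) + (c1:ℤ) * (C2:ℤ)) := by
            have e : (B1:ℤ) * (B2:ℤ) + (c1:ℤ) * (C2:ℤ)
                = (c1:ℤ) * (C2:ℤ) + (B1:ℤ) * (B2:ℤ) := by ring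
            rw [e]; exact h2
          exact ⟨(cong_iff c1 c2 h.symm ((B1:ℤ)*(B2:ℤ)) C1 hC1).mp h1,
                 (cong_iff c2 c1 h ((B1:ℤ)*(B2:ℤ)) C2 hC2).mp h2'⟩
        · rintro ⟨hce1, hce2⟩
          have h1 : (c1:ℤ) ∣ ((B1:ℤ) * (B2:ℤ) + (c2:ℤ) * (C1:ℤ)) :=
            (cong_iff c1 c2 h.symm ((B1:ℤ)*(B2:ℤ)) C1 hC1).mpr hce1
          have h2' : (c2:ℤ) ∣ ((B1:ℤ) * (B2:ℤ) + (c1:ℤ) * (C2:ℤ)) :=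
            (cong_iff c2 c1 h ((B1:ℤ)*(B2:ℤ)) C2 hC2).mpr hce2
          have h2 : (c2:ℤ) ∣ ((c1:ℤ) * (C2:ℤ) + (B1:ℤ) * (B2:ℤ)) := by
            have e : (c1:ℤ) * (C2:ℤ) + (B1:ℤ) * (B2:ℤ)
                = (B1:ℤ) * (B2:ℤ) + (c1:ℤ) * (C2:ℤ) := by ring
            rw [e]; exact h2'
          refine ⟨(crt_split c1 c2 h _ _ _ _).mpr ⟨h1, h2⟩, ?_, ?_⟩
          · have : Nat.gcd (Nat.gcd B1 C1) c1 ∣ 1 := by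
              rw [← hg.1]
              exact Nat.dvd_gcd ((Nat.gcd_dvd_left _ _).trans (Nat.gcd_dvd_left _ _))
                (Nat.gcd_dvd_right _ _)
            have h1' : Nat.gcd (Nat.gcd B1 C1) c1 = 1 := Nat.dvd_one.mp this
            simpa [Int.gcd_natCast_natCast] using h1'
          · have : Nat.gcd (Nat.gcd B2 C2) c2 ∣ 1 := by
              rw [← hg.2]
              exact Nat.dvd_gcd ((Nat.gcd_dvd_left _ _).trans (Nat.gcd_dvd_left _ _))
                (Nat.gcd_dvd_right _ _)
            have h2'' : Nat.gcd (Nat.gcd B2 C2) c2 = 1 := Nat.dvd_one.mp this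
            simpa [Int.gcd_natCast_natCast] using h2''
      by_cases hc : C1 = e1 ∧ C2 = e2
      · rw [if_pos (hiff.mpr hc), if_pos hc]
        obtain ⟨hd, hg1, hg2⟩ := hiff.mpr hc
        obtain ⟨h1, h2⟩ := (crt_split c1 c2 h (B1:ℤ) (B2:ℤ) (C1:ℤ) (C2:ℤ)).mp hd
        have hcong2 : (c2:ℤ) ∣ ((B2:ℤ) * (B1:ℤ) + (c1:ℤ) * (C2:ℤ)) := by
          have e : (B2:ℤ) * (B1:ℤ) + (c1:ℤ) * (C2:ℤ)
              = (c1:ℤ) * (C2:ℤ) + (B1:ℤ) * (B2:ℤ) := by ring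
          rw [e]; exact h2
        rw [hV]
        exact sl3Summand_eval M1 M2 N1 N2 c1 c2 hc1 hc2 (B1:ℤ) (C1:ℤ) (B2:ℤ) (C2:ℤ)
          ((((B1 : ZMod c1))⁻¹).val : ℤ) ((((B2 : ZMod c2))⁻¹).val : ℤ)
          (inv_val_dvd c1 B1 hg.1) (inv_val_dvd c2 B2 hg.2) h1 hcong2
      · rw [if_neg (fun hh => hc (hiff.mp hh)), if_neg hc]
    rw [Finset.sum_congr rfl (fun C1 hC1 => Finset.sum_congr rfl (hterm C1 hC1))]
    have hinner : ∀ C1 ∈ Finset.range c1,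
        (∑ C2 ∈ Finset.range c2, if C1 = e1 ∧ C2 = e2 then V else 0)
          = if C1 = e1 then V else 0 := by
      intro C1 _
      by_cases hC : C1 = e1
      · subst hC
        simp only [eq_self_iff_true, true_and, if_true]
        rw [Finset.sum_ite_eq' (Finset.range c2) e2 (fun _ => V),
          if_pos (Finset.mem_range.mpr he2lt)]
      · simp [hC]
    rw [Finset.sum_congr rfl hinner,
      Finset.sum_ite_eq' (Finset.range c1) e1 (fun _ => V),
      if_pos (Finset.mem_range.mpr he1lt)]
  · rw [if_neg hg]
    refine Finset.sum_eq_zero fun C1 hC1 => Finset.sum_eq_zero fun C2 hC2 => ?_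
    rw [if_neg]
    rintro ⟨hd, hg1, hg2⟩
    obtain ⟨h1, h2⟩ := (crt_split c1 c2 h (B1:ℤ) (B2:ℤ) (C1:ℤ) (C2:ℤ)).mp hd
    have h2' : (c2:ℤ) ∣ ((B2:ℤ) * (B1:ℤ) + (c1:ℤ) * (C2:ℤ)) := by
      have e : (B2:ℤ) * (B1:ℤ) + (c1:ℤ) * (C2:ℤ)
          = (c1:ℤ) * (C2:ℤ) + (B1:ℤ) * (B2:ℤ) := by ring
      rw [e]; exact h2
    exact hg ⟨gcd_forced c1 c2 h B1 B2 C1 h1 hg1, gcd_forced c2 c1 h.symm B2 B1 C2 h2' hg2⟩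

lemma unit_inv_val (c : ℕ) [NeZero c] (u : (ZMod c)ˣ) :
    ((((u : ZMod c).val : ℕ) : ZMod c)⁻¹ : ZMod c).val = ((u⁻¹ : (ZMod c)ˣ) : ZMod c).val := by
  rw [ZMod.natCast_val, ZMod.cast_id, ZMod.inv_coe_unit]

lemma sumF_eq (m1 n2 : ℤ) (c1 c2 : ℕ) (hc1 : 0 < c1) (h : Nat.Coprime c1 c2) :
    haveI : NeZero c1 := ⟨hc1.ne'⟩
    (∑ B1 ∈ Finset.range c1, if Nat.gcd B1 c1 = 1 then
        eFn ((((-n2) * (B1:ℤ) + m1 * (((((B1 : ZMod c1))⁻¹).val : ℤ) * (c2:ℤ)) : ℤ) : ℂ) / (c1:ℂ))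
      else 0)
      = kloosterman m1 (-n2 * (c2:ℤ)) c1 := by
  haveI : NeZero c1 := ⟨hc1.ne'⟩
  rw [kloosterman,
    sum_coprime_eq_sum_units c1 (fun x => eFn ((((-n2) * (x:ℤ)
      + m1 * (((((x : ZMod c1))⁻¹).val : ℤ) * (c2:ℤ)) : ℤ) : ℂ) / (c1:ℂ))),
    sum_coprime_eq_sum_units c1 (fun x => eFn (((m1 * (x : ℤ)
      + (-n2 * (c2:ℤ)) * ((((x : ZMod c1)⁻¹ : ZMod c1).val : ℤ)) : ℤ) : ℂ) / (c1:ℂ)))]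
  set cu : (ZMod c1)ˣ := ZMod.unitOfCoprime c2 h.symm with hcu
  refine Fintype.sum_equiv ((Equiv.inv ((ZMod c1)ˣ)).trans (Equiv.mulLeft cu)) _ _ ?_
  intro u
  simp only [Equiv.trans_apply, Equiv.inv_apply, Equiv.coe_mulLeft]
  refine eFn_congr hc1 ?_
  rw [← ZMod.intCast_zmod_eq_zero_iff_dvd]
  push_cast
  simp only [ZMod.natCast_val, ZMod.cast_id, ZMod.inv_coe_unit]
  have hc2u : ((cu : ZMod c1) : ZMod c1) = (c2 : ZMod c1) := ZMod.coe_unitOfCoprime c2 h.symm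
  have hcuinv : (cu : ZMod c1) * ((cu⁻¹ : (ZMod c1)ˣ) : ZMod c1) = 1 := by
    rw [← Units.val_mul, mul_inv_cancel, Units.val_one]
  have key : ((cu : ZMod c1) * ((u⁻¹ : (ZMod c1)ˣ) : ZMod c1))⁻¹
      = ((u : ZMod c1)) * ((cu⁻¹ : (ZMod c1)ˣ) : ZMod c1) := by
    rw [← Units.val_mul, ZMod.inv_coe_unit, mul_inv_rev, inv_inv, Units.val_mul]
  rw [key]
  rw [hc2u] at hcuinv ⊢
  have hcuinv' : (c2 : ZMod c1) * ((cu⁻¹ : (ZMod c1)ˣ) : ZMod c1) = 1 := hcuinv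
  linear_combination ((n2 : ZMod c1) * ((u : ZMod c1))) * hcuinv'

lemma sumG_eq (m2 n1 : ℤ) (c1 c2 : ℕ) (hc2 : 0 < c2) :
    haveI : NeZero c2 := ⟨hc2.ne'⟩
    (∑ B2 ∈ Finset.range c2, if Nat.gcd B2 c2 = 1 then
        eFn ((((-n1) * (B2:ℤ) + m2 * (((((B2 : ZMod c2))⁻¹).val : ℤ) * (c1:ℤ)) : ℤ) : ℂ) / (c2:ℂ))
      else 0)
      = kloosterman (m2 * (c1:ℤ)) (-n1) c2 := by
  haveI : NeZero c2 := ⟨hc2.ne'⟩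
  rw [kloosterman,
    sum_coprime_eq_sum_units c2 (fun x => eFn ((((-n1) * (x:ℤ)
      + m2 * (((((x : ZMod c2))⁻¹).val : ℤ) * (c1:ℤ)) : ℤ) : ℂ) / (c2:ℂ))),
    sum_coprime_eq_sum_units c2 (fun x => eFn (((m2 * (c1:ℤ) * (x : ℤ)
      + (-n1) * ((((x : ZMod c2)⁻¹ : ZMod c2).val : ℤ)) : ℤ) : ℂ) / (c2:ℂ)))]
  refine Fintype.sum_equiv (Equiv.inv ((ZMod c2)ˣ)) _ _ ?_
  intro u
  simp only [Equiv.inv_apply]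
  rw [unit_inv_val c2 u, unit_inv_val c2 u⁻¹, inv_inv]
  refine eFn_congr hc2 ⟨0, by ring⟩

/-- Factorization of the long-element SL(3,Z) Kloosterman sum for coprime moduli. -/
theorem swl_factorization (m1 m2 n1 n2 : ℤ) (c1 c2 : ℕ) (hc1 : 0 < c1) (hc2 : 0 < c2)
    (h : Nat.Coprime c1 c2) :
    Swl m1 m2 n1 n2 c1 c2
      = kloosterman m1 (-n2 * (c2 : ℤ)) c1 * kloosterman (m2 * (c1 : ℤ)) (-n1) c2 := by
  haveI : NeZero c1 := ⟨hc1.ne'⟩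
  haveI : NeZero c2 := ⟨hc2.ne'⟩
  rw [Swl, SL3Kloosterman]
  have h1 : ∀ B1 ∈ Finset.range c1,
      (∑ C1 ∈ Finset.range c1, ∑ B2 ∈ Finset.range c2, ∑ C2 ∈ Finset.range c2,
        if ((c1 * c2 : ℤ) ∣ ((c1 : ℤ) * (C2:ℤ) + (B1 : ℤ) * (B2:ℤ) + (c2 : ℤ) * (C1:ℤ))
            ∧ Int.gcd (Int.gcd (B1 : ℤ) (C1 : ℤ)) (c1 : ℤ) = 1
            ∧ Int.gcd (Int.gcd (B2 : ℤ) (C2 : ℤ)) (c2 : ℤ) = 1) then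
          sl3Summand (-n2) (-n1) m1 m2 c1 c2 (B1 : ℤ) (C1 : ℤ) (B2 : ℤ) (C2 : ℤ)
        else 0)
      = ∑ B2 ∈ Finset.range c2,
          (if Nat.gcd B1 c1 = 1 then
            eFn ((((-n2) * (B1:ℤ)
              + m1 * (((((B1 : ZMod c1))⁻¹).val : ℤ) * (c2:ℤ)) : ℤ) : ℂ) / (c1:ℂ))
          else 0)
          * (if Nat.gcd B2 c2 = 1 then
            eFn ((((-n1) * (B2:ℤ)
              + m2 * (((((B2 : ZMod c2))⁻¹).val : ℤ) * (c1:ℤ)) : ℤ) : ℂ) / (c2:ℂ))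
          else 0) := by
    intro B1 hB1
    rw [Finset.sum_comm]
    refine Finset.sum_congr rfl fun B2 hB2 => ?_
    rw [collapse (-n2) (-n1) m1 m2 c1 c2 hc1 hc2 h B1 B2
      (Finset.mem_range.mp hB1) (Finset.mem_range.mp hB2)]
    by_cases hg : Nat.gcd B1 c1 = 1 ∧ Nat.gcd B2 c2 = 1
    · rw [if_pos hg, if_pos hg.1, if_pos hg.2]
    · rw [if_neg hg]
      rcases Classical.em (Nat.gcd B1 c1 = 1) with hg1 | hg1
      · rcases Classical.em (Nat.gcd B2 c2 = 1) with hg2 | hg2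
        · exact absurd ⟨hg1, hg2⟩ hg
        · rw [if_neg hg2, mul_zero]
      · rw [if_neg hg1, zero_mul]
  rw [Finset.sum_congr rfl h1, ← Finset.sum_mul_sum]
  rw [sumF_eq m1 n2 c1 c2 hc1 h, sumG_eq m2 n1 c1 c2 hc2]
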